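/- Let p be a prime with p ≡ 1 (mod 4) and let n(p) denote its least positive quadratic non-residue. Then for T = 2p² there exists a symmetric two-dimensional arithmetic progression A ⊆ [-T, T] containing no non-zero perfect square, which is proper and satisfies |A| ≥ c·p·n(p) ≥ c'·T^(1/2)·n(p) for absolute positive constants c, c'. -/

import Mathlib

/-!
Take `q₁ = p`, `q₂ = p + n` with `n = n(p)`, `X₁ = p - 1`, `X₂ = n - 1`. Modulo `p` an element
`x₁ p + x₂ q₂` is `x₂ n`. Since `p ≡ 1 (mod 4)`, `-1` is a square, so every `x₂` with
`0 < |x₂| < n` is a non-zero square mod `p`, and `x₂ n` is a non-residue; when `x₂ = 0` the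
element is `x₁ p` with `|x₁| < p`, never a non-zero square. Properness holds because `2 (n - 1) < p`,
and the size of the progression is `(2p - 1)(2n - 1) ≥ p n`. All of this fits in `[-2p², 2p²]`
thanks to the classical bound `n (n - 1) < p`: with `m = ⌊p/n⌋ + 1`, the residue of `n m` is
`n m - p ∈ (0, n)`, a square, so `m` is a non-residue and `n ≤ m`.
-/

/-- `nres p` is the least positive quadratic non-residue modulo `p`. -/
noncomputable def nres (p : ℕ) : ℕ :=
  sInf {m : ℕ | 0 < m ∧ ¬ IsSquare ((m : ZMod p))}

theorem IsSquare.right_of_mul {α : Type*} [CommGroupWithZero α] {a b : α} (ha : IsSquare a)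
    (ha0 : a ≠ 0) (hab : IsSquare (a * b)) : IsSquare b := by
  simpa [ha0] using hab.div ha

section LeastNonResidue

variable {p : ℕ} [Fact p.Prime]

theorem exists_pos_lt_not_isSquare (hp2 : p ≠ 2) :
    ∃ m, m < p ∧ 0 < m ∧ ¬ IsSquare (m : ZMod p) := by
  obtain ⟨a, ha⟩ := FiniteField.exists_nonsquare (F := ZMod p) (by rwa [ZMod.ringChar_zmod_n])
  have ha0 : a ≠ 0 := by rintro rfl; exact ha IsSquare.zero
  exact ⟨a.val, ZMod.val_lt a, ZMod.val_pos.mpr ha0, by rwa [ZMod.natCast_zmod_val]⟩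

theorem nres_spec (hp2 : p ≠ 2) : 0 < nres p ∧ ¬ IsSquare (nres p : ZMod p) := by
  obtain ⟨m, -, hm⟩ := exists_pos_lt_not_isSquare hp2
  exact Nat.sInf_mem (s := {m : ℕ | 0 < m ∧ ¬ IsSquare ((m : ZMod p))}) ⟨m, hm⟩

theorem nres_lt (hp2 : p ≠ 2) : nres p < p := by
  obtain ⟨m, hmp, hm⟩ := exists_pos_lt_not_isSquare hp2
  exact (Nat.sInf_le hm).trans_lt hmp

theorem isSquare_of_pos_of_lt_nres {k : ℕ} (hk : 0 < k) (hkn : k < nres p) :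
    IsSquare (k : ZMod p) := by
  by_contra h
  exact Nat.notMem_of_lt_sInf hkn ⟨hk, h⟩

theorem one_lt_nres (hp2 : p ≠ 2) : 1 < nres p := by
  obtain ⟨hpos, hn⟩ := nres_spec hp2
  by_contra! h
  have h1 : nres p = 1 := by omega
  exact hn (by simp [h1])

theorem nres_mul_nres_lt (hp2 : p ≠ 2) : nres p * nres p < p + nres p := by
  set n := nres p
  have hn1 : 1 < n := one_lt_nres hp2
  have hnp : n < p := nres_lt hp2
  have hnsq : ¬ IsSquare (n : ZMod p) := (nres_spec hp2).2
  have hndvd : ¬ n ∣ p := fun h ↦ by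
    rcases (Fact.out : p.Prime).eq_one_or_self_of_dvd n h with h | h <;> omega
  set m := p / n + 1
  have hdiv := Nat.div_add_mod p n
  have hmod : 0 < p % n := Nat.pos_of_ne_zero fun h ↦ hndvd (Nat.dvd_of_mod_eq_zero h)
  have hmodlt : p % n < n := Nat.mod_lt _ (by omega)
  set r := n * m - p
  have hnm : n * m = p + r := by simp only [r, m]; rw [mul_add]; omega
  have hr : 0 < r ∧ r < n := by simp only [r, m]; rw [mul_add]; omega
  have hnm_cast : (n : ZMod p) * m = r := by
    rw [← Nat.cast_mul, hnm, Nat.cast_add, ZMod.natCast_self, zero_add]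
  have hr0 : (r : ZMod p) ≠ 0 := by
    rw [Ne, ZMod.natCast_eq_zero_iff]
    exact fun h ↦ by have := Nat.le_of_dvd hr.1 h; omega
  have hm_nonres : ¬ IsSquare (m : ZMod p) := fun hm ↦ by
    have hm0 : (m : ZMod p) ≠ 0 := fun h0 ↦ hr0 (by rw [← hnm_cast, h0, mul_zero])
    refine hnsq (hm.right_of_mul hm0 ?_)
    rw [mul_comm, hnm_cast]
    exact isSquare_of_pos_of_lt_nres hr.1 hr.2
  have hnm_le : n ≤ m := Nat.sInf_le ⟨Nat.succ_pos _, hm_nonres⟩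
  calc n * n ≤ n * m := Nat.mul_le_mul_left n hnm_le
    _ = p + r := hnm
    _ < p + n := by omega

theorem isSquare_intCast_of_natAbs_lt_nres (hp4 : p % 4 = 1) {x : ℤ} (hx0 : x ≠ 0)
    (hx : x.natAbs < nres p) : IsSquare (x : ZMod p) := by
  have habs : IsSquare (x.natAbs : ZMod p) :=
    isSquare_of_pos_of_lt_nres (Int.natAbs_pos.mpr hx0) hx
  rcases Int.natAbs_eq x with h | h <;> rw [h]
  · simpa using habs
  · have hneg : IsSquare (-1 : ZMod p) := ZMod.exists_sq_eq_neg_one_iff.mpr (by omega)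
    simpa using hneg.mul habs

end LeastNonResidue

section Progression

variable {q₁ q₂ : ℤ} {X₁ X₂ : ℝ}

def symmProgression (q₁ q₂ : ℤ) (X₁ X₂ : ℝ) : Set ℤ :=
  {m : ℤ | ∃ x₁ x₂ : ℤ, |(x₁ : ℝ)| ≤ X₁ ∧ |(x₂ : ℝ)| ≤ X₂ ∧ m = x₁ * q₁ + x₂ * q₂}

def IsProperProgression (q₁ q₂ : ℤ) (X₁ X₂ : ℝ) : Prop :=
  ∀ x₁ x₂ y₁ y₂ : ℤ, |(x₁ : ℝ)| ≤ X₁ → |(x₂ : ℝ)| ≤ X₂ → |(y₁ : ℝ)| ≤ X₁ → |(y₂ : ℝ)| ≤ X₂ →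
    x₁ * q₁ + x₂ * q₂ = y₁ * q₁ + y₂ * q₂ → x₁ = y₁ ∧ x₂ = y₂

theorem abs_mul_add_mul_le {x₁ x₂ : ℤ} (h₁ : |(x₁ : ℝ)| ≤ X₁) (h₂ : |(x₂ : ℝ)| ≤ X₂) :
    |((x₁ * q₁ + x₂ * q₂ : ℤ) : ℝ)| ≤ X₁ * |(q₁ : ℝ)| + X₂ * |(q₂ : ℝ)| := by
  push_cast
  refine (abs_add_le _ _).trans (add_le_add ?_ ?_) <;> rw [abs_mul] <;>
    exact mul_le_mul_of_nonneg_right ‹_› (abs_nonneg _)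

theorem isProperProgression_of_isCoprime (hq₁ : 0 < q₁) (hq : IsCoprime q₁ q₂)
    (hX₂ : 2 * X₂ < q₁) : IsProperProgression q₁ q₂ X₁ X₂ := by
  intro x₁ x₂ y₁ y₂ _ hx₂ _ hy₂ heq
  have hdvd : q₁ ∣ x₂ - y₂ := hq.dvd_of_dvd_mul_left ⟨y₁ - x₁, by linear_combination heq⟩
  have hlt : |x₂ - y₂| < q₁ := by
    have : |((x₂ - y₂ : ℤ) : ℝ)| < q₁ := by
      push_cast
      linarith [abs_sub (x₂ : ℝ) y₂]
    exact_mod_cast this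
  have h₂ : x₂ = y₂ := sub_eq_zero.mp (Int.eq_zero_of_abs_lt_dvd hdvd hlt)
  subst h₂
  exact ⟨mul_right_cancel₀ hq₁.ne' (by linarith), rfl⟩

theorem symmProgression_natCast_eq_image (q₁ q₂ : ℤ) (N₁ N₂ : ℕ) :
    symmProgression q₁ q₂ N₁ N₂ =
      (fun x : ℤ × ℤ ↦ x.1 * q₁ + x.2 * q₂) '' (Set.Icc (-N₁ : ℤ) N₁ ×ˢ Set.Icc (-N₂ : ℤ) N₂) := by
  ext m
  simp only [symmProgression, Set.mem_ofPred_eq, Set.mem_image, Set.mem_prod, Set.mem_Icc,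
    Prod.exists, ← abs_le]
  constructor
  · rintro ⟨x₁, x₂, h₁, h₂, rfl⟩
    exact ⟨x₁, x₂, ⟨by exact_mod_cast h₁, by exact_mod_cast h₂⟩, rfl⟩
  · rintro ⟨x₁, x₂, ⟨h₁, h₂⟩, rfl⟩
    exact ⟨x₁, x₂, by exact_mod_cast h₁, by exact_mod_cast h₂, rfl⟩

theorem ncard_symmProgression {N₁ N₂ : ℕ} (h : IsProperProgression q₁ q₂ N₁ N₂) :
    (symmProgression q₁ q₂ N₁ N₂).ncard = (2 * N₁ + 1) * (2 * N₂ + 1) := by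
  rw [symmProgression_natCast_eq_image, Set.InjOn.ncard_image, ← Finset.coe_Icc, ← Finset.coe_Icc,
    ← Finset.coe_product, Set.ncard_coe_finset, Finset.card_product, Int.card_Icc, Int.card_Icc]
  · have hcard (N : ℕ) : ((N : ℤ) + 1 - -N).toNat = 2 * N + 1 := by omega
    rw [hcard, hcard]
  rintro ⟨x₁, x₂⟩ hx ⟨y₁, y₂⟩ hy hxy
  simp only [Set.mem_prod, Set.mem_Icc, ← abs_le] at hx hy
  obtain ⟨rfl, rfl⟩ := h x₁ x₂ y₁ y₂ (by exact_mod_cast hx.1) (by exact_mod_cast hx.2)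
    (by exact_mod_cast hy.1) (by exact_mod_cast hy.2) hxy
  rfl

end Progression

theorem Int.eq_zero_of_mul_prime_eq_sq {p : ℕ} (hp : p.Prime) {x v : ℤ} (hx : |x| < p)
    (h : x * p = v ^ 2) : v = 0 := by
  obtain ⟨w, rfl⟩ := Int.Prime.dvd_pow' hp ⟨x, by rw [← h, mul_comm]⟩
  have hp0 : (p : ℤ) ≠ 0 := by exact_mod_cast hp.ne_zero
  have hxw : x = p * w ^ 2 := mul_right_cancel₀ hp0 (by rw [h]; ring)
  have hx0 : x = 0 := Int.eq_zero_of_abs_lt_dvd ⟨w ^ 2, hxw⟩ hx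
  simp_all

section NresProgression

variable {p : ℕ} [Fact p.Prime]

theorem intCast_mul_add_mul_add_eq (x₁ x₂ r : ℤ) :
    ((x₁ * p + x₂ * (p + r) : ℤ) : ZMod p) = x₂ * r := by
  push_cast
  simp

theorem isProperProgression_nres (hp2 : p ≠ 2) (X₁ : ℝ) :
    IsProperProgression p (p + nres p) X₁ (nres p - 1 : ℕ) := by
  have hn1 := one_lt_nres hp2
  have hnp := nres_lt hp2
  have hcop : IsCoprime (p : ℤ) (p + nres p) := by
    rw [Prime.coprime_iff_not_dvd (Nat.prime_iff_prime_int.mp Fact.out), dvd_add_right dvd_rfl]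
    exact fun h ↦ by have := Int.le_of_dvd (by omega) h; omega
  refine isProperProgression_of_isCoprime (by exact_mod_cast (Fact.out : p.Prime).pos) hcop ?_
  have hkey : (nres p : ℤ) * nres p < p + nres p := by exact_mod_cast nres_mul_nres_lt hp2
  have : 2 * (nres p - 1) < p := by
    have : 2 * ((nres p : ℤ) - 1) < p := by nlinarith
    omega
  exact_mod_cast this

theorem abs_le_of_mem_nresProgression (hp2 : p ≠ 2) {m : ℤ}
    (hm : m ∈ symmProgression p (p + nres p) (p - 1 : ℕ) (nres p - 1 : ℕ)) :
    |(m : ℝ)| ≤ 2 * (p : ℝ) ^ 2 := by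
  obtain ⟨x₁, x₂, h₁, h₂, rfl⟩ := hm
  refine (abs_mul_add_mul_le h₁ h₂).trans ?_
  have hn1 := one_lt_nres hp2
  have hnp : (nres p : ℝ) < p := by exact_mod_cast nres_lt hp2
  have hkey : (nres p : ℝ) * nres p < p + nres p := by exact_mod_cast nres_mul_nres_lt hp2
  push_cast [Nat.cast_sub hn1.le, Nat.cast_sub (Fact.out : p.Prime).one_le]
  rw [abs_of_nonneg (by positivity), abs_of_nonneg (by positivity)]
  nlinarith

theorem ne_sq_of_mem_nresProgression (hp4 : p % 4 = 1) {m : ℤ}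
    (hm : m ∈ symmProgression p (p + nres p) (p - 1 : ℕ) (nres p - 1 : ℕ)) {v : ℤ} (hv : v ≠ 0) :
    m ≠ v ^ 2 := by
  have hp2 : p ≠ 2 := by omega
  obtain ⟨x₁, x₂, h₁, h₂, rfl⟩ := hm
  have hx₁ : |x₁| ≤ (p - 1 : ℕ) := by exact_mod_cast h₁
  have hx₂ : |x₂| ≤ (nres p - 1 : ℕ) := by exact_mod_cast h₂
  intro hsq
  rcases eq_or_ne x₂ 0 with rfl | hx₂0
  · refine hv (Int.eq_zero_of_mul_prime_eq_sq Fact.out ?_ (by simpa using hsq))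
    omega
  have hmod : IsSquare ((x₂ : ZMod p) * nres p) := by
    have h := intCast_mul_add_mul_add_eq (p := p) x₁ x₂ (nres p)
    rw [Int.cast_natCast, hsq] at h
    exact h ▸ ⟨v, by push_cast; ring⟩
  have hnp := nres_lt hp2
  rw [Int.abs_eq_natAbs] at hx₂
  have hx₂sq := isSquare_intCast_of_natAbs_lt_nres hp4 hx₂0 (by omega)
  have hx₂ne : (x₂ : ZMod p) ≠ 0 := by
    rw [Ne, ZMod.intCast_zmod_eq_zero_iff_dvd]
    exact fun h ↦ hx₂0 (Int.eq_zero_of_abs_lt_dvd h (by rw [Int.abs_eq_natAbs]; omega))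
  exact (nres_spec hp2).2 (hx₂sq.right_of_mul hx₂ne hmod)

end NresProgression

/-- For large primes `p ≡ 1 (mod 4)` and `T = 2p²` there is a proper symmetric
two-dimensional arithmetic progression in `[-T,T]` avoiding non-zero squares with at least
`c·p·n(p) ≥ c'·T^(1/2)·n(p)` elements. -/
theorem lower_bound_progression :
    ∃ c c' : ℝ, 0 < c ∧ 0 < c' ∧ ∃ p₀ : ℕ, ∀ p : ℕ, p.Prime → p % 4 = 1 → p₀ ≤ p →
      ∃ (q₁ q₂ : ℤ) (X₁ X₂ : ℝ), 0 < q₁ ∧ 0 < q₂ ∧ 0 < X₁ ∧ 0 < X₂ ∧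
        (∀ x₁ x₂ : ℤ, |(x₁ : ℝ)| ≤ X₁ → |(x₂ : ℝ)| ≤ X₂ →
          |((x₁ * q₁ + x₂ * q₂ : ℤ) : ℝ)| ≤ 2 * (p : ℝ) ^ 2) ∧
        (∀ x₁ x₂ : ℤ, |(x₁ : ℝ)| ≤ X₁ → |(x₂ : ℝ)| ≤ X₂ →
          ∀ n : ℤ, n ≠ 0 → x₁ * q₁ + x₂ * q₂ ≠ n ^ 2) ∧
        (∀ x₁ x₂ y₁ y₂ : ℤ, |(x₁ : ℝ)| ≤ X₁ → |(x₂ : ℝ)| ≤ X₂ → |(y₁ : ℝ)| ≤ X₁ →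
          |(y₂ : ℝ)| ≤ X₂ → x₁ * q₁ + x₂ * q₂ = y₁ * q₁ + y₂ * q₂ →
          x₁ = y₁ ∧ x₂ = y₂) ∧
        c * (p : ℝ) * (nres p : ℝ) ≤
          (({m : ℤ | ∃ x₁ x₂ : ℤ, |(x₁ : ℝ)| ≤ X₁ ∧ |(x₂ : ℝ)| ≤ X₂ ∧
            m = x₁ * q₁ + x₂ * q₂}.ncard : ℝ)) ∧
        c' * Real.sqrt (2 * (p : ℝ) ^ 2) * (nres p : ℝ) ≤
          (({m : ℤ | ∃ x₁ x₂ : ℤ, |(x₁ : ℝ)| ≤ X₁ ∧ |(x₂ : ℝ)| ≤ X₂ ∧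
            m = x₁ * q₁ + x₂ * q₂}.ncard : ℝ)) := by
  refine ⟨1, (√2)⁻¹, one_pos, by positivity, 0, fun p hp hp4 _ ↦ ?_⟩
  have : Fact p.Prime := ⟨hp⟩
  have hp2 : p ≠ 2 := by omega
  have hp1 := hp.one_lt
  have hn1 := one_lt_nres hp2
  have hproper := isProperProgression_nres hp2 (p - 1 : ℕ)
  have hcard : (p : ℝ) * nres p ≤
      (symmProgression p (p + nres p) (p - 1 : ℕ) (nres p - 1 : ℕ)).ncard := by
    rw [ncard_symmProgression hproper]
    exact_mod_cast Nat.mul_le_mul (by omega) (by omega)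
  have hsqrt : √(2 * (p : ℝ) ^ 2) = √2 * p := by
    rw [Real.sqrt_mul zero_le_two, Real.sqrt_sq (Nat.cast_nonneg p)]
  refine ⟨p, p + nres p, (p - 1 : ℕ), (nres p - 1 : ℕ), by omega, by omega,
    Nat.cast_pos.mpr (by omega), Nat.cast_pos.mpr (by omega),
    fun x₁ x₂ h₁ h₂ ↦ abs_le_of_mem_nresProgression hp2 ⟨x₁, x₂, h₁, h₂, rfl⟩,
    fun x₁ x₂ h₁ h₂ v hv ↦ ne_sq_of_mem_nresProgression hp4 ⟨x₁, x₂, h₁, h₂, rfl⟩ hv,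
    hproper, by rw [one_mul]; exact hcard, ?_⟩
  rw [hsqrt, ← mul_assoc, inv_mul_cancel₀ (by positivity), one_mul]
  exact hcard
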